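/- Let T : ℝ → ℝ be integrable with ∫_{-∞}^{∞} |T(λ)| dλ < ∞, and let g : ℝ → ℝ be C¹ with g(0) = 1, ∫ g² = 1, and ∫ (g')² < ∞. Define g_{λ₀}(λ) = g(λ/λ₀)/√λ₀. If for every λ₀ > 0 the inequality ∫ g_{λ₀}(λ)² T(λ) dλ ≥ −C ∫ (g_{λ₀}'(λ))² dλ holds for a fixed constant C > 0, then ∫_{-∞}^{∞} T(λ) dλ ≥ 0. -/

import Mathlib

/-!
Rescaling `l ↦ l / s` turns the smeared inequality into
`∫ g (l / s)² T l ≥ -C s⁻¹ ∫ (g')²`. As `s → ∞` the right side tends to `0`, while the left side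
tends to `g 0² ∫ T = ∫ T` by dominated convergence; the domination holds because `g²` is bounded,
its derivative `2 g g'` being integrable as a product of two `L²` functions.
-/

open MeasureTheory Real Filter Topology

theorem norm_sub_le_integral_norm_of_hasDerivAt {E : Type*} [NormedAddCommGroup E]
    [NormedSpace ℝ E] [CompleteSpace E] {F F' : ℝ → E} (hF : ∀ x, HasDerivAt F (F' x) x)
    (hF' : Integrable F') (a b : ℝ) : ‖F b - F a‖ ≤ ∫ x, ‖F' x‖ := by
  rw [← intervalIntegral.integral_eq_sub_of_hasDerivAt (fun x _ => hF x)
    hF'.intervalIntegrable]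
  exact intervalIntegral.norm_integral_le_integral_norm_uIoc.trans
    (setIntegral_le_integral hF'.norm (.of_forall fun _ => norm_nonneg _))

theorem exists_norm_le_of_hasDerivAt_of_integrable {E : Type*} [NormedAddCommGroup E]
    [NormedSpace ℝ E] [CompleteSpace E] {F F' : ℝ → E} (hF : ∀ x, HasDerivAt F (F' x) x)
    (hF' : Integrable F') : ∃ M, ∀ x, ‖F x‖ ≤ M :=
  ⟨‖F 0‖ + ∫ x, ‖F' x‖, fun x => norm_le_norm_add_norm_sub' (F x) (F 0) |>.trans
    (add_le_add_right (norm_sub_le_integral_norm_of_hasDerivAt hF hF' 0 x) _)⟩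

theorem exists_abs_sq_le_of_integrable_sq_of_integrable_deriv_sq {g : ℝ → ℝ}
    (hg : ContDiff ℝ 1 g) (hg2 : Integrable fun x => g x ^ 2)
    (hg' : Integrable fun x => deriv g x ^ 2) :
    ∃ M, ∀ x, |g x ^ 2| ≤ M := by
  have hgL2 : MemLp g 2 := (memLp_two_iff_integrable_sq hg.continuous.aestronglyMeasurable).2 hg2
  have hg'L2 : MemLp (deriv g) 2 :=
    (memLp_two_iff_integrable_sq (hg.continuous_deriv le_rfl).aestronglyMeasurable).2 hg'
  have hderiv : ∀ x, HasDerivAt (fun x => g x ^ 2) (2 * (g x * deriv g x)) x := fun x => by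
    simpa [mul_assoc] using ((hg.differentiable one_ne_zero x).hasDerivAt.fun_pow 2)
  exact exists_norm_le_of_hasDerivAt_of_integrable hderiv
    ((hgL2.integrable_mul hg'L2).const_mul 2)

theorem tendsto_integral_comp_div_mul_atTop {h T : ℝ → ℝ} (hh : Continuous h) {M : ℝ}
    (hM : ∀ x, |h x| ≤ M) (hT : Integrable T) :
    Tendsto (fun s => ∫ l, h (l / s) * T l) atTop (𝓝 (∫ l, h 0 * T l)) := by
  refine tendsto_integral_filter_of_dominated_convergence (fun l => M * |T l|)
    (.of_forall fun s => ((hh.comp (continuous_id.div_const s)).aestronglyMeasurable.mul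
      hT.aestronglyMeasurable)) (.of_forall fun s => .of_forall fun l => ?_)
    (hT.abs.const_mul M) (.of_forall fun l => ?_)
  · rw [norm_mul, Real.norm_eq_abs, Real.norm_eq_abs]
    exact mul_le_mul_of_nonneg_right (hM _) (abs_nonneg _)
  · exact ((hh.tendsto 0).comp (tendsto_const_nhds.div_atTop tendsto_id)).mul_const (T l)

theorem integral_sq_div_sqrt_mul (g T : ℝ → ℝ) {s : ℝ} (hs : 0 < s) :
    ∫ l, (g (l / s) / √s) ^ 2 * T l = s⁻¹ * ∫ l, g (l / s) ^ 2 * T l := by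
  rw [← integral_const_mul]
  congr 1 with l
  rw [div_pow, sq_sqrt hs.le]
  ring

theorem integral_deriv_comp_div_div_sqrt_sq (g : ℝ → ℝ) {s : ℝ} (hs : 0 < s) :
    ∫ l, deriv (fun x => g (x / s) / √s) l ^ 2 = (s ^ 2)⁻¹ * ∫ l, deriv g l ^ 2 := by
  have hderiv : ∀ l, deriv (fun x => g (x / s) / √s) l = s⁻¹ * deriv g (l / s) / √s := by
    intro l
    simp only [div_eq_inv_mul _ s, deriv_div_const]
    rw [deriv_comp_mul_left, smul_eq_mul]
  simp_rw [hderiv, div_pow, mul_pow, sq_sqrt hs.le]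
  rw [integral_div, integral_const_mul, Measure.integral_comp_div (fun u => deriv g u ^ 2),
    abs_of_pos hs, smul_eq_mul]
  field_simp

theorem snec_implies_anec_general
    (T g : ℝ → ℝ) (C : ℝ)
    (hT : Integrable T)
    (hg : ContDiff ℝ 1 g) (hg0 : g 0 = 1)
    (hgnorm : ∫ l : ℝ, (g l) ^ 2 = 1)
    (hg' : Integrable (fun l : ℝ => (deriv g l) ^ 2))
    (hSNEC : ∀ l₀ : ℝ, 0 < l₀ →
      ∫ l : ℝ, (g (l / l₀) / Real.sqrt l₀) ^ 2 * T l ≥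
        -C * ∫ l : ℝ, (deriv (fun x : ℝ => g (x / l₀) / Real.sqrt l₀) l) ^ 2) :
    ∫ l : ℝ, T l ≥ 0 := by
  have hg2 : Integrable fun l => g l ^ 2 := Integrable.of_integral_ne_zero (by simp [hgnorm])
  obtain ⟨M, hM⟩ := exists_abs_sq_le_of_integrable_sq_of_integrable_deriv_sq hg hg2 hg'
  have hsmeared :=
    tendsto_integral_comp_div_mul_atTop (h := fun x => g x ^ 2) (hg.continuous.pow 2) hM hT
  simp only [hg0, one_pow, one_mul] at hsmeared
  have hdecay : Tendsto (fun s : ℝ => -C * s⁻¹ * ∫ l, deriv g l ^ 2) atTop (𝓝 0) := by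
    simpa using (tendsto_inv_atTop_zero.const_mul (-C)).mul_const (∫ l, deriv g l ^ 2)
  refine le_of_tendsto_of_tendsto hdecay hsmeared ?_
  filter_upwards [eventually_gt_atTop 0] with s hs
  have h := hSNEC s hs
  rw [integral_sq_div_sqrt_mul g T hs, integral_deriv_comp_div_div_sqrt_sq g hs] at h
  calc -C * s⁻¹ * ∫ l, deriv g l ^ 2 = s * (-C * ((s ^ 2)⁻¹ * ∫ l, deriv g l ^ 2)) := by
        field_simp
    _ ≤ s * (s⁻¹ * ∫ l, g (l / s) ^ 2 * T l) := by gcongr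
    _ = ∫ l, g (l / s) ^ 2 * T l := by field_simp

theorem snec_implies_anec
    (T g : ℝ → ℝ) (C : ℝ) (hC : 0 < C)
    (hT : Integrable T)
    (hg : ContDiff ℝ 1 g) (hg0 : g 0 = 1)
    (hgnorm : ∫ l : ℝ, (g l) ^ 2 = 1)
    (hg' : Integrable (fun l : ℝ => (deriv g l) ^ 2))
    (hSNEC : ∀ l₀ : ℝ, 0 < l₀ →
      ∫ l : ℝ, (g (l / l₀) / Real.sqrt l₀) ^ 2 * T l ≥
        -C * ∫ l : ℝ, (deriv (fun x : ℝ => g (x / l₀) / Real.sqrt l₀) l) ^ 2) :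
    ∫ l : ℝ, T l ≥ 0 :=
  snec_implies_anec_general T g C hT hg hg0 hgnorm hg' hSNEC
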